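/- arXiv:cs/0304040 — 5 statements merged into one kernel-verified Lean document; each statement's English description precedes it below -/
import Mathlib

section
/- Schwartz–Zippel lemma: Let F be a field, let p be a nonzero polynomial in n variables over F of total degree at most d, and let S be a finite nonempty subset of F. If each variable is assigned an independently, uniformly chosen value from S, then the probability that p evaluates to 0 is at most d / |S|. -/
set_option maxHeartbeats 1000000

open MvPolynomial Finset in
private lemma sz_aux {F : Type*} [Field F] [DecidableEq F] (S : Finset F) :
    ∀ (n d : ℕ) (p : MvPolynomial (Fin n) F), p ≠ 0 → p.totalDegree ≤ d →
    ((Fintype.piFinset fun _ : Fin n => S).filter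
        fun r => MvPolynomial.eval r p = 0).card * S.card ≤ d * S.card ^ n := by
  intro n
  induction n with
  | zero =>
    intro d p hp hd
    have : ((Fintype.piFinset fun _ : Fin 0 => S).filter
        fun r => MvPolynomial.eval r p = 0) = ∅ := by
      rw [Finset.filter_eq_empty_iff]
      intro r _
      obtain ⟨c, rfl⟩ := MvPolynomial.C_surjective (Fin 0) p
      simp only [MvPolynomial.eval_C]
      intro h
      exact hp (by rw [h, map_zero])
    rw [this]
    simp
  | succ n ih =>
    intro d p hp hd
    set q := MvPolynomial.finSuccEquiv F n p with hq
    have hq0 : q ≠ 0 := by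
      intro h
      exact hp ((map_eq_zero_iff _ (MvPolynomial.finSuccEquiv F n).injective).mp h)
    set k := q.natDegree with hk
    have hck : q.coeff k ≠ 0 := Polynomial.leadingCoeff_ne_zero.mpr hq0
    have hkd : (q.coeff k).totalDegree + k ≤ d :=
      le_trans (MvPolynomial.totalDegree_coeff_finSuccEquiv_add_le p k hck) hd
    have hkd' : k ≤ d := le_trans (Nat.le_add_left _ _) hkd
    set B := (Fintype.piFinset fun _ : Fin n => S).filter
        (fun s => MvPolynomial.eval s (q.coeff k) = 0) with hB
    have ihB : B.card * S.card ≤ (d - k) * S.card ^ n :=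
      ih (d - k) (q.coeff k) hck (by omega)
    set A := (Fintype.piFinset fun _ : Fin (n+1) => S).filter
        (fun r => MvPolynomial.eval r p = 0) with hA
    have key : A ⊆ (Fintype.piFinset fun _ : Fin n => S).biUnion
        (fun s => (S.filter fun y => MvPolynomial.eval (((Fin.cons y s : Fin (n+1) → F) : Fin (n+1) → F)) p = 0).image
          (fun y => ((Fin.cons y s : Fin (n+1) → F) : Fin (n+1) → F))) := by
      intro r hr
      rw [hA, Finset.mem_filter] at hr
      rw [Finset.mem_biUnion]
      refine ⟨Fin.tail r, ?_, ?_⟩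
      · rw [Fintype.mem_piFinset]; intro i
        exact (Fintype.mem_piFinset.mp hr.1) i.succ
      · rw [Finset.mem_image]
        refine ⟨r 0, ?_, Fin.cons_self_tail r⟩
        rw [Finset.mem_filter]
        refine ⟨(Fintype.mem_piFinset.mp hr.1) 0, ?_⟩
        rw [Fin.cons_self_tail]
        exact hr.2
    have hbound : ∀ s ∈ (Fintype.piFinset fun _ : Fin n => S),
        (S.filter fun y => MvPolynomial.eval (((Fin.cons y s : Fin (n+1) → F) : Fin (n+1) → F)) p = 0).card
          ≤ if MvPolynomial.eval s (q.coeff k) = 0 then S.card else k := by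
      intro s _
      split_ifs with hs
      · exact Finset.card_filter_le _ _
      · set f := q.map (MvPolynomial.eval s) with hf
        have hfk : f.coeff k ≠ 0 := by
          rw [hf, Polynomial.coeff_map]; exact hs
        have hf0 : f ≠ 0 := fun h => hfk (by simp [h])
        have hfdeg : f.natDegree = k :=
          Polynomial.natDegree_map_of_leadingCoeff_ne_zero _ hs
        have heq : (S.filter fun y => MvPolynomial.eval (((Fin.cons y s : Fin (n+1) → F) : Fin (n+1) → F)) p = 0)
            = S.filter fun y => f.eval y = 0 := by
          apply Finset.filter_congr
          intro y _
          rw [MvPolynomial.eval_eq_eval_mv_eval']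
        rw [heq, ← hfdeg]
        apply Polynomial.card_le_degree_of_subset_roots
        intro y hy
        rw [Finset.mem_val, Finset.mem_filter] at hy
        rw [Polynomial.mem_roots hf0]
        exact hy.2
    set C : Finset (Fin (n+1) → F) := (Fintype.piFinset fun _ : Fin n => S).biUnion
        (fun s => (S.filter fun y => MvPolynomial.eval (((Fin.cons y s : Fin (n+1) → F) : Fin (n+1) → F)) p = 0).image
          (fun y => ((Fin.cons y s : Fin (n+1) → F) : Fin (n+1) → F))) with hC
    have step1 : A.card ≤ B.card * S.card + S.card ^ n * k := by
      have h1 : A.card ≤ C.card := Finset.card_le_card key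
      have h2 : C.card ≤ ∑ s ∈ (Fintype.piFinset fun _ : Fin n => S),
          ((S.filter fun y => MvPolynomial.eval (((Fin.cons y s : Fin (n+1) → F) : Fin (n+1) → F)) p = 0).image
            (fun y => ((Fin.cons y s : Fin (n+1) → F) : Fin (n+1) → F))).card := by
        rw [hC]; exact Finset.card_biUnion_le
      have h3 : ∑ s ∈ (Fintype.piFinset fun _ : Fin n => S),
          ((S.filter fun y => MvPolynomial.eval (((Fin.cons y s : Fin (n+1) → F) : Fin (n+1) → F)) p = 0).image
            (fun y => ((Fin.cons y s : Fin (n+1) → F) : Fin (n+1) → F))).card ≤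
          ∑ s ∈ (Fintype.piFinset fun _ : Fin n => S),
          (if MvPolynomial.eval s (q.coeff k) = 0 then S.card else k) :=
        Finset.sum_le_sum fun s hs => le_trans Finset.card_image_le (hbound s hs)
      have h4 : ∑ s ∈ (Fintype.piFinset fun _ : Fin n => S),
          (if MvPolynomial.eval s (q.coeff k) = 0 then S.card else k) =
          ∑ s ∈ B, S.card + ∑ s ∈ (Fintype.piFinset fun _ : Fin n => S).filter
            (fun s => ¬ MvPolynomial.eval s (q.coeff k) = 0), k := by
        rw [hB, ← Finset.sum_filter_add_sum_filter_not
          (Fintype.piFinset fun _ : Fin n => S)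
          (fun s => MvPolynomial.eval s (q.coeff k) = 0)]
        congr 1
        · exact Finset.sum_congr rfl fun s hs => if_pos ((Finset.mem_filter.mp hs).2)
        · exact Finset.sum_congr rfl fun s hs => if_neg ((Finset.mem_filter.mp hs).2)
      have h5 : ∑ s ∈ B, S.card + ∑ s ∈ (Fintype.piFinset fun _ : Fin n => S).filter
            (fun s => ¬ MvPolynomial.eval s (q.coeff k) = 0), k
          ≤ B.card * S.card + S.card ^ n * k := by
        rw [Finset.sum_const, Finset.sum_const, smul_eq_mul, smul_eq_mul]
        gcongr
        calc ((Fintype.piFinset fun _ : Fin n => S).filter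
              (fun s => ¬ MvPolynomial.eval s (q.coeff k) = 0)).card
            ≤ (Fintype.piFinset fun _ : Fin n => S).card := Finset.card_filter_le _ _
          _ = S.card ^ n := by simp
      omega
    calc A.card * S.card ≤ (B.card * S.card + S.card ^ n * k) * S.card :=
          Nat.mul_le_mul_right _ step1
      _ = B.card * S.card * S.card + k * S.card ^ (n + 1) := by ring
      _ ≤ (d - k) * S.card ^ n * S.card + k * S.card ^ (n + 1) := by
          gcongr
      _ = ((d - k) + k) * S.card ^ (n + 1) := by ring
      _ = d * S.card ^ (n + 1) := by rw [Nat.sub_add_cancel hkd']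

open MvPolynomial Finset in
/-- Schwartz–Zippel lemma over a field. -/
theorem schwartz_zippel {F : Type*} [Field F] [DecidableEq F] {n d : ℕ}
    (p : MvPolynomial (Fin n) F) (hp : p ≠ 0) (hdeg : p.totalDegree ≤ d)
    (S : Finset F) (hS : S.Nonempty) :
    (((Fintype.piFinset fun _ : Fin n => S).filter
        fun r => MvPolynomial.eval r p = 0).card : ℝ) / (S.card : ℝ) ^ n
      ≤ (d : ℝ) / (S.card : ℝ) := by
  have hS0 : 0 < (S.card : ℝ) := by exact_mod_cast Finset.card_pos.mpr hS
  have h := sz_aux S n d p hp hdeg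
  rw [div_le_div_iff₀ (by positivity) hS0]
  calc (((Fintype.piFinset fun _ : Fin n => S).filter
        fun r => MvPolynomial.eval r p = 0).card : ℝ) * S.card
      ≤ ((d * S.card ^ n : ℕ) : ℝ) := by exact_mod_cast h
    _ = (d : ℝ) * (S.card : ℝ) ^ n := by push_cast; ring
end

section
/- Existence of combinatorial designs: for every natural number t ≥ 2 and every ℓ, there exist a universe size μ = O(ℓ² / log t) (concretely μ ≤ 10·ℓ²/⌈log₂ t⌉ suffices when ℓ ≥ ⌈log₂ t⌉) and sets D₁,…,D_t ⊆ {1,…,μ} such that |Dᵢ| = ℓ for all i and |Dᵢ ∩ Dⱼ| ≤ ⌈log₂ t⌉ for all i ≠ j. -/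
/-!
Let `s = ⌈log₂ t⌉ + 1`. A set `D` of size `ℓ` in a universe of size `μ`
meets at most `C(ℓ, s) C(μ - s, ℓ - s)` of the `ℓ`-sets in `s` or more points (each such set
contains an `s`-subset of `D`). So as long as `t C(ℓ, s) C(μ - s, ℓ - s) < C(μ, ℓ)`, one
can greedily choose `t` sets one after another, each avoiding the sets that meet one of its
predecessors in `s` points. For `μ = kℓ` with `k = ⌊10ℓ / ⌈log₂ t⌉⌋` this condition follows
from `k^s C(ℓ, s) ≤ C(kℓ, s)`, `s! C(ℓ, s) ≤ ℓ^s` and `s^s ≤ 3^s s!`.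
-/

open Finset

namespace Nat

theorem pow_self_le_three_pow_mul_factorial (s : ℕ) : s ^ s ≤ 3 ^ s * s ! := by
  have h : (s : ℝ) ^ s / s ! ≤ 3 ^ s :=
    calc (s : ℝ) ^ s / s ! ≤ Real.exp s := Real.pow_div_factorial_le_exp _ s.cast_nonneg s
      _ = Real.exp 1 ^ s := by rw [← Real.exp_nat_mul, mul_one]
      _ ≤ 3 ^ s := by
        gcongr
        exact Real.exp_one_lt_d9.le.trans (by norm_num)
  rw [div_le_iff₀ (by positivity)] at h
  exact_mod_cast h

theorem factorial_mul_choose_le_pow (ℓ s : ℕ) : s ! * ℓ.choose s ≤ ℓ ^ s :=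
  descFactorial_eq_factorial_mul_choose ℓ s ▸ descFactorial_le_pow ℓ s

theorem pow_mul_descFactorial_le_descFactorial_mul {k : ℕ} (hk : 1 ≤ k) (ℓ s : ℕ) :
    k ^ s * ℓ.descFactorial s ≤ (k * ℓ).descFactorial s := by
  induction s with
  | zero => simp
  | succ s ih =>
    rw [descFactorial_succ, descFactorial_succ]
    calc k ^ (s + 1) * ((ℓ - s) * ℓ.descFactorial s)
        = k * (ℓ - s) * (k ^ s * ℓ.descFactorial s) := by ring
      _ ≤ (k * ℓ - s) * (k * ℓ).descFactorial s := by
        gcongr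
        rw [Nat.mul_sub]
        exact Nat.sub_le_sub_left (Nat.le_mul_of_pos_left s hk) _

theorem pow_mul_choose_le_choose_mul {k : ℕ} (hk : 1 ≤ k) (ℓ s : ℕ) :
    k ^ s * ℓ.choose s ≤ (k * ℓ).choose s := by
  have h := pow_mul_descFactorial_le_descFactorial_mul hk ℓ s
  rw [descFactorial_eq_factorial_mul_choose, descFactorial_eq_factorial_mul_choose,
    mul_left_comm] at h
  exact Nat.le_of_mul_le_mul_left h (factorial_pos s)

theorem two_mul_mul_choose_le_pow {t ℓ s k : ℕ} (ht : 2 * t ≤ 2 ^ s)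
    (hk : 6 * ℓ ≤ k * s) :
    2 * t * ℓ.choose s ≤ k ^ s := by
  refine Nat.le_of_mul_le_mul_right ?_ (by positivity : 0 < 3 ^ s * s !)
  calc 2 * t * ℓ.choose s * (3 ^ s * s !) = 2 * t * 3 ^ s * (s ! * ℓ.choose s) := by ring
    _ ≤ 2 ^ s * 3 ^ s * ℓ ^ s := by gcongr; exact factorial_mul_choose_le_pow ℓ s
    _ = (6 * ℓ) ^ s := by rw [← mul_pow, ← mul_pow]; norm_num
    _ ≤ (k * s) ^ s := by gcongr
    _ = k ^ s * s ^ s := mul_pow ..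
    _ ≤ k ^ s * (3 ^ s * s !) := by gcongr; exact pow_self_le_three_pow_mul_factorial s

theorem mul_choose_mul_choose_lt_choose_mul {t ℓ s k : ℕ} (hk1 : 1 ≤ k) (ht : 2 * t ≤ 2 ^ s)
    (hk : 6 * ℓ ≤ k * s) :
    t * (ℓ.choose s * (k * ℓ - s).choose (ℓ - s)) < (k * ℓ).choose ℓ := by
  have hpos : 0 < (k * ℓ).choose ℓ := choose_pos (Nat.le_mul_of_pos_left ℓ hk1)
  rcases lt_or_ge ℓ s with hℓs | hsℓ
  · simp [choose_eq_zero_of_lt hℓs, hpos]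
  suffices h : 2 * (t * (ℓ.choose s * (k * ℓ - s).choose (ℓ - s))) ≤ (k * ℓ).choose ℓ by
    omega
  refine Nat.le_of_mul_le_mul_right ?_ (choose_pos hsℓ)
  calc 2 * (t * (ℓ.choose s * (k * ℓ - s).choose (ℓ - s))) * ℓ.choose s
      = 2 * t * ℓ.choose s * (ℓ.choose s * (k * ℓ - s).choose (ℓ - s)) := by ring
    _ ≤ k ^ s * (ℓ.choose s * (k * ℓ - s).choose (ℓ - s)) := by
        gcongr; exact two_mul_mul_choose_le_pow ht hk
    _ ≤ (k * ℓ).choose s * (k * ℓ - s).choose (ℓ - s) := by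
        rw [← mul_assoc]; gcongr; exact pow_mul_choose_le_choose_mul hk1 ℓ s
    _ = (k * ℓ).choose ℓ * ℓ.choose s := (choose_mul hsℓ).symm

end Nat

theorem Finset.exists_fin_pairwise_not_rel {β : Type*} [DecidableEq β] {P : Finset β}
    {r : β → β → Prop} [DecidableRel r] (hr : ∀ x y, r x y → r y x) {b : ℕ}
    (hb : ∀ x ∈ P, #{y ∈ P | r x y} ≤ b) :
    ∀ n, n * b < #P →
      ∃ f : Fin n → β, (∀ i, f i ∈ P) ∧ Pairwise fun i j => ¬ r (f i) (f j)
  | 0, _ => ⟨Fin.elim0, Fin.rec0, Fin.rec0⟩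
  | n + 1, hn => by
    obtain ⟨f, hfP, hf⟩ := exists_fin_pairwise_not_rel hr hb n
      ((Nat.mul_le_mul_right b n.le_succ).trans_lt hn)
    have hbad : #(univ.biUnion fun i => {y ∈ P | r (f i) y}) < #P :=
      calc _ ≤ ∑ i, #{y ∈ P | r (f i) y} := card_biUnion_le
        _ ≤ n * b := by simpa using sum_le_card_nsmul univ _ b fun i _ => hb (f i) (hfP i)
        _ < #P := (Nat.mul_le_mul_right b n.le_succ).trans_lt hn
    obtain ⟨x, hxP, hx⟩ := exists_mem_notMem_of_card_lt_card hbad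
    simp only [mem_biUnion, mem_univ, mem_filter, true_and, not_exists, not_and] at hx
    refine ⟨Fin.cons x f, Fin.cases hxP hfP, fun i j hij => ?_⟩
    cases i using Fin.cases <;> cases j using Fin.cases
    · exact absurd rfl hij
    · exact fun h => hx _ hxP (hr _ _ h)
    · exact hx _ hxP
    · exact hf fun h => hij (congrArg Fin.succ h)

section Counting

variable {α : Type*} [Fintype α] [DecidableEq α]

theorem Finset.card_filter_powersetCard_superset_le (T : Finset α) (ℓ : ℕ) :
    #{S ∈ powersetCard ℓ univ | T ⊆ S} ≤ (Fintype.card α - #T).choose (ℓ - #T) := by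
  rw [← card_compl, ← card_powersetCard]
  refine card_le_card_of_injOn (· \ T) (fun S hS => ?_) (fun S hS S' hS' h => ?_)
  · simp only [coe_filter, mem_powersetCard_univ, Set.mem_ofPred_eq] at hS
    simp [mem_powersetCard, card_sdiff_of_subset hS.2, hS.1]
  · simp only [coe_filter, mem_powersetCard_univ, Set.mem_ofPred_eq] at hS hS'
    rw [← sdiff_union_of_subset hS.2, ← sdiff_union_of_subset hS'.2]
    exact congrArg (· ∪ T) h

theorem Finset.card_filter_powersetCard_le_card_inter_le (D : Finset α) (ℓ s : ℕ) :
    #{S ∈ powersetCard ℓ univ | s ≤ #(D ∩ S)} ≤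
      (#D).choose s * (Fintype.card α - s).choose (ℓ - s) :=
  calc #{S ∈ powersetCard ℓ univ | s ≤ #(D ∩ S)}
      ≤ #((D.powersetCard s).biUnion fun T => {S ∈ powersetCard ℓ univ | T ⊆ S}) := by
        refine card_le_card fun S hS => ?_
        rw [mem_filter] at hS
        obtain ⟨T, hTS, hT⟩ := exists_subset_card_eq hS.2
        exact mem_biUnion.2 ⟨T, mem_powersetCard.2 ⟨hTS.trans inter_subset_left, hT⟩,
          mem_filter.2 ⟨hS.1, hTS.trans inter_subset_right⟩⟩
    _ ≤ ∑ T ∈ D.powersetCard s, #{S ∈ powersetCard ℓ univ | T ⊆ S} := card_biUnion_le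
    _ ≤ ∑ T ∈ D.powersetCard s, (Fintype.card α - s).choose (ℓ - s) :=
        sum_le_sum fun T hT =>
          (mem_powersetCard.1 hT).2 ▸ card_filter_powersetCard_superset_le T ℓ
    _ = (#D).choose s * (Fintype.card α - s).choose (ℓ - s) := by
        rw [sum_const, card_powersetCard, smul_eq_mul]

theorem exists_design_of_mul_lt_choose {t ℓ s : ℕ}
    (h : t * (ℓ.choose s * (Fintype.card α - s).choose (ℓ - s)) <
      (Fintype.card α).choose ℓ) :
    ∃ D : Fin t → Finset α, (∀ i, #(D i) = ℓ) ∧ Pairwise fun i j => #(D i ∩ D j) < s := by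
  have hsymm (S T : Finset α) (h : s ≤ #(S ∩ T)) : s ≤ #(T ∩ S) := inter_comm S T ▸ h
  have hbad (D : Finset α) (hD : D ∈ powersetCard ℓ univ) :
      #{S ∈ powersetCard ℓ univ | s ≤ #(D ∩ S)} ≤
        ℓ.choose s * (Fintype.card α - s).choose (ℓ - s) :=
    mem_powersetCard_univ.1 hD ▸ card_filter_powersetCard_le_card_inter_le D ℓ s
  obtain ⟨D, hD, hDD⟩ := exists_fin_pairwise_not_rel hsymm hbad t
    (by rwa [card_powersetCard, card_univ])
  exact ⟨D, fun i => mem_powersetCard_univ.1 (hD i), fun i j hij => not_le.1 (hDD hij)⟩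

end Counting

/-- Existence of combinatorial designs: for `t ≥ 2` and `ℓ ≥ ⌈log₂ t⌉` there is a
family of `t` subsets of a universe of size `μ ≤ 10·ℓ²/⌈log₂ t⌉`, each of size `ℓ`,
with pairwise intersections of size at most `⌈log₂ t⌉`. -/
theorem design_exists (t ℓ : ℕ) (ht : 2 ≤ t) (hℓ : Nat.clog 2 t ≤ ℓ) :
    ∃ (μ : ℕ) (D : Fin t → Finset (Fin μ)),
      μ ≤ 10 * ℓ ^ 2 / Nat.clog 2 t ∧
      (∀ i, (D i).card = ℓ) ∧
      (∀ i j, i ≠ j → ((D i) ∩ (D j)).card ≤ Nat.clog 2 t) := by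
  set Δ := Nat.clog 2 t
  have hΔ : 0 < Δ := Nat.clog_pos one_lt_two ht
  set k := 10 * ℓ / Δ
  have hkΔ : k * Δ ≤ 10 * ℓ := Nat.div_mul_le_self _ _
  have hkΔ' : 10 * ℓ < k * Δ + Δ := Nat.lt_div_mul_add hΔ
  have hk1 : 1 ≤ k := (Nat.le_div_iff_mul_le hΔ).2 (by omega)
  have h2t : 2 * t ≤ 2 ^ (Δ + 1) := by
    rw [pow_succ]; linarith [Nat.le_pow_clog one_lt_two t]
  obtain ⟨D, hD, hDD⟩ := exists_design_of_mul_lt_choose (α := Fin (k * ℓ)) (s := Δ + 1)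
    (by simpa using Nat.mul_choose_mul_choose_lt_choose_mul hk1 h2t (by nlinarith))
  refine ⟨k * ℓ, D, ?_, hD, fun i j hij => Nat.lt_succ_iff.1 (hDD hij)⟩
  rw [Nat.le_div_iff_mul_le hΔ]
  nlinarith
end

section
/- Almost all Boolean functions are hard: for all sufficiently large n, the fraction of functions f : {0,1}ⁿ → {0,1} computable by Boolean circuits of size at most 2ⁿ/(4n) is less than 2^(−2^(n−1)); in particular, there exists a function on n bits with circuit complexity greater than 2ⁿ/(4n). -/
/-- A Boolean circuit with `n` inputs and `s` gates over the basis of all binary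
Boolean functions. -/
structure BoolCircuit (n s : ℕ) where
  op : Fin s → Bool → Bool → Bool
  arg1 : (i : Fin s) → Fin (n + i)
  arg2 : (i : Fin s) → Fin (n + i)

/-- The value computed by gate `i` of a circuit on input `x`. -/
def BoolCircuit.value {n s : ℕ} (c : BoolCircuit n s) (x : Fin n → Bool) :
    (i : ℕ) → i < s → Bool
  | i, h =>
    let get : Fin (n + i) → Bool := fun j =>
      if hj : (j : ℕ) < n then x ⟨j, hj⟩
      else c.value x ((j : ℕ) - n) (by have := j.isLt; omega)
    c.op ⟨i, h⟩ (get (c.arg1 ⟨i, h⟩)) (get (c.arg2 ⟨i, h⟩))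
  termination_by i => i
  decreasing_by have := j.isLt; omega

/-- The output of a circuit: the value of its last gate (or `false` if it has no gates). -/
def BoolCircuit.eval {n s : ℕ} (c : BoolCircuit n s) (x : Fin n → Bool) : Bool :=
  if h : 0 < s then c.value x (s - 1) (by omega) else false

/-- `f` is computable by some Boolean circuit with at most `s` gates. -/
def ComputableBySize (n s : ℕ) (f : (Fin n → Bool) → Bool) : Prop :=
  ∃ s' ≤ s, ∃ c : BoolCircuit n s', ∀ x, c.eval x = f x

/-! ### Auxiliary counting lemmas -/

/-- Encoding of circuits of size at most `s` into a fixed finite type, by padding. -/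
def circEncode (n s : ℕ) : (Σ s' : Fin (s+1), BoolCircuit n s'.val) →
    Fin (s+1) × (Fin s → Bool → Bool → Bool) × (Fin s → Fin (n+s+1)) × (Fin s → Fin (n+s+1)) :=
  fun p =>
    (p.1,
     fun i => if h' : i.val < p.1.val then p.2.op ⟨i, h'⟩ else (fun _ _ => false),
     fun i => if h' : i.val < p.1.val then
        ⟨(p.2.arg1 ⟨i, h'⟩).val, by have := (p.2.arg1 ⟨i, h'⟩).isLt; omega⟩ else ⟨0, by omega⟩,
     fun i => if h' : i.val < p.1.val then
        ⟨(p.2.arg2 ⟨i, h'⟩).val, by have := (p.2.arg2 ⟨i, h'⟩).isLt; omega⟩ else ⟨0, by omega⟩)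

lemma circEncode_inj (n s : ℕ) : Function.Injective (circEncode n s) := by
  rintro ⟨s₁, c₁⟩ ⟨s₂, c₂⟩ h
  simp only [circEncode, Prod.mk.injEq] at h
  obtain ⟨h0, h1, h2, h3⟩ := h
  subst h0
  congr 1
  have hlt : ∀ i : Fin s₁.val, i.val < s := fun i => lt_of_lt_of_le i.isLt (by omega)
  cases c₁; cases c₂
  simp only [BoolCircuit.mk.injEq]
  refine ⟨funext fun i => ?_, funext fun i => ?_, funext fun i => ?_⟩
  · have := congrFun h1 ⟨i.val, hlt i⟩
    simpa [i.isLt] using this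
  · have := congrFun h2 ⟨i.val, hlt i⟩
    simp only [i.isLt, dif_pos] at this
    have := congrArg Fin.val this
    simp at this
    exact Fin.ext this
  · have := congrFun h3 ⟨i.val, hlt i⟩
    simp only [i.isLt, dif_pos] at this
    have := congrArg Fin.val this
    simp at this
    exact Fin.ext this

lemma count_bound (n s : ℕ) :
    Set.ncard {f : (Fin n → Bool) → Bool | ComputableBySize n s f} ≤
      (s + 1) * 16 ^ s * (n + s + 1) ^ s * (n + s + 1) ^ s := by
  classical
  haveI : Finite (Σ s' : Fin (s+1), BoolCircuit n s'.val) :=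
    Finite.of_injective _ (circEncode_inj n s)
  have hsub : {f : (Fin n → Bool) → Bool | ComputableBySize n s f} ⊆
      Set.range (fun p : Σ s' : Fin (s+1), BoolCircuit n s'.val => p.2.eval) := by
    rintro f ⟨s', hs', c, hc⟩
    exact ⟨⟨⟨s', by omega⟩, c⟩, funext hc⟩
  have h1 : Set.ncard {f : (Fin n → Bool) → Bool | ComputableBySize n s f} ≤
      Set.ncard (Set.range (fun p : Σ s' : Fin (s+1), BoolCircuit n s'.val => p.2.eval)) :=
    Set.ncard_le_ncard hsub (Set.finite_range _)
  have h2 : Set.ncard (Set.range (fun p : Σ s' : Fin (s+1), BoolCircuit n s'.val => p.2.eval)) ≤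
      Nat.card (Σ s' : Fin (s+1), BoolCircuit n s'.val) := by
    rw [← Set.image_univ]
    exact (Set.ncard_image_le Set.finite_univ).trans (Set.ncard_univ _).le
  have h3 : Nat.card (Σ s' : Fin (s+1), BoolCircuit n s'.val) ≤
      Nat.card (Fin (s+1) × (Fin s → Bool → Bool → Bool) × (Fin s → Fin (n+s+1)) ×
        (Fin s → Fin (n+s+1))) :=
    Nat.card_le_card_of_injective _ (circEncode_inj n s)
  have h4 : Nat.card (Fin (s+1) × (Fin s → Bool → Bool → Bool) × (Fin s → Fin (n+s+1)) ×
      (Fin s → Fin (n+s+1))) = (s + 1) * 16 ^ s * (n + s + 1) ^ s * (n + s + 1) ^ s := by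
    simp [Nat.card_eq_fintype_card, Fintype.card_fun]
    ring
  omega

lemma card_funs (n : ℕ) : Nat.card ((Fin n → Bool) → Bool) = 2 ^ 2 ^ n := by
  simp [Nat.card_eq_fintype_card, Fintype.card_fun]

lemma aux_pow (m : ℕ) : (m + 16) + 1 ≤ 2 ^ (m + 10) := by
  induction m with
  | zero => norm_num
  | succ k ih => calc k + 1 + 16 + 1 ≤ 2 ^ (k+10) + 2^(k+10) := by omega
       _ = 2 ^ (k+1+10) := by ring

set_option maxHeartbeats 1000000 in
lemma arith' (m s : ℕ) (hsmul : 4 * (m + 16) * s ≤ 2 ^ (m + 16)) (hs1 : 1 ≤ s)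
    (hsle : s ≤ 2 ^ (m + 10)) :
    (s + 1) * 16 ^ s * (m + 16 + s + 1) ^ s * (m + 16 + s + 1) ^ s < 2 ^ 2 ^ (m + 15) := by
  have hns : m + 16 + s + 1 ≤ 2 ^ (m + 11) := by
    have h1 := aux_pow m
    calc m + 16 + s + 1 ≤ 2 ^ (m+10) + 2 ^ (m+10) := by omega
      _ = 2 ^ (m+11) := by ring
  have key : (s + 1) * 16 ^ s * (m + 16 + s + 1) ^ s * (m + 16 + s + 1) ^ s
      ≤ 2 ^ ((2 * m + 27) * s) := by
    have e1 : (s + 1) ≤ 2 ^ s := Nat.succ_le_of_lt (Nat.lt_two_pow_self (n := s))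
    calc (s + 1) * 16 ^ s * (m + 16 + s + 1) ^ s * (m + 16 + s + 1) ^ s
        ≤ 2 ^ s * 16 ^ s * (2 ^ (m+11)) ^ s * (2 ^ (m+11)) ^ s := by gcongr
      _ = 2 ^ (s + 4 * s + (m+11) * s + (m+11) * s) := by
          rw [show (16:ℕ) = 2 ^ 4 by norm_num, ← pow_mul, ← pow_mul, ← pow_add,
            ← pow_add, ← pow_add]
      _ = 2 ^ ((2 * m + 27) * s) := by ring_nf
  have hexp : (2 * m + 27) * s < 2 ^ (m + 15) := by
    have h2 : 2 * (m + 16) * s ≤ 2 ^ (m + 15) := by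
      have h3 : 2 * (2 * (m+16) * s) ≤ 2 * 2 ^ (m+15) := by
        calc 2 * (2 * (m+16) * s) = 4 * (m+16) * s := by ring
          _ ≤ 2 ^ (m+16) := hsmul
          _ = 2 * 2 ^ (m+15) := by ring
      omega
    nlinarith
  calc (s + 1) * 16 ^ s * (m + 16 + s + 1) ^ s * (m + 16 + s + 1) ^ s
      ≤ 2 ^ ((2 * m + 27) * s) := key
    _ < 2 ^ 2 ^ (m + 15) := Nat.pow_lt_pow_right (by omega) hexp

set_option maxHeartbeats 2000000 in
lemma arith (n : ℕ) (hn : 16 ≤ n) :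
    (2 ^ n / (4 * n) + 1) * 16 ^ (2 ^ n / (4 * n)) *
      (n + 2 ^ n / (4 * n) + 1) ^ (2 ^ n / (4 * n)) *
      (n + 2 ^ n / (4 * n) + 1) ^ (2 ^ n / (4 * n)) < 2 ^ 2 ^ (n - 1) := by
  obtain ⟨m, rfl⟩ : ∃ m, n = m + 16 := ⟨n - 16, by omega⟩
  have h4 : 4 * (m + 16) ≤ 2 ^ (m + 16) := by
    calc 4 * (m + 16) ≤ 4 * 2 ^ (m + 10) := by have := aux_pow m; omega
      _ ≤ 2 ^ 2 * 2 ^ (m + 10) := by norm_num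
      _ = 2 ^ (m + 12) := by rw [← pow_add]; ring_nf
      _ ≤ 2 ^ (m + 16) := Nat.pow_le_pow_right (by omega) (by omega)
  have hsmul : 4 * (m + 16) * (2 ^ (m+16) / (4 * (m + 16))) ≤ 2 ^ (m + 16) := by
    rw [mul_comm]; exact Nat.div_mul_le_self _ _
  have hs1 : 1 ≤ 2 ^ (m+16) / (4 * (m + 16)) := Nat.one_le_div_iff (by omega) |>.mpr h4
  have hsle : 2 ^ (m+16) / (4 * (m + 16)) ≤ 2 ^ (m + 10) := by
    calc 2 ^ (m+16) / (4 * (m+16)) ≤ 2 ^ (m+16) / 64 :=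
          Nat.div_le_div_left (by omega) (by omega)
      _ = 2 ^ (m+10) := by
          rw [show m + 16 = (m+10) + 6 by omega, pow_add]; norm_num
  have hm1 : m + 16 - 1 = m + 15 := by omega
  rw [hm1]
  exact arith' m _ hsmul hs1 hsle

/-- Almost all Boolean functions are hard: for all sufficiently large `n`, the
fraction of `n`-bit Boolean functions computable by circuits of size at most
`2ⁿ/(4n)` is less than `2^(−2^(n−1))`; in particular some function on `n` bits has
circuit complexity greater than `2ⁿ/(4n)`. -/
theorem almost_all_functions_hard :
    ∃ N : ℕ, ∀ n ≥ N,
      ((Set.ncard {f : (Fin n → Bool) → Bool | ComputableBySize n (2 ^ n / (4 * n)) f} : ℝ)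
          / 2 ^ (2 ^ n) < ((2 : ℝ) ^ (2 ^ (n - 1)))⁻¹) ∧
      ∃ f : (Fin n → Bool) → Bool, ¬ ComputableBySize n (2 ^ n / (4 * n)) f := by
  refine ⟨16, fun n hn => ?_⟩
  set s := 2 ^ n / (4 * n) with hs
  set A := Set.ncard {f : (Fin n → Bool) → Bool | ComputableBySize n s f} with hA
  have hAlt : A < 2 ^ 2 ^ (n - 1) := lt_of_le_of_lt (count_bound n s) (arith n hn)
  have hsplit : 2 ^ (n - 1) + 2 ^ (n - 1) = 2 ^ n := by
    rw [← two_mul, ← pow_succ']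
    congr 1
    omega
  constructor
  · rw [div_lt_iff₀ (by positivity), inv_mul_eq_div, lt_div_iff₀ (by positivity)]
    calc (A : ℝ) * 2 ^ 2 ^ (n - 1) < 2 ^ 2 ^ (n - 1) * 2 ^ 2 ^ (n - 1) := by
          have : (A : ℝ) < 2 ^ 2 ^ (n - 1) := by exact_mod_cast hAlt
          have hp : (0:ℝ) < 2 ^ 2 ^ (n - 1) := by positivity
          nlinarith
      _ = 2 ^ 2 ^ n := by rw [← pow_add, hsplit]
  · by_contra h
    push_neg at h
    have huniv : {f : (Fin n → Bool) → Bool | ComputableBySize n s f} = Set.univ :=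
      Set.eq_univ_of_forall h
    have : A = 2 ^ 2 ^ n := by rw [hA, huniv, Set.ncard_univ, card_funs]
    have hle : (2:ℕ) ^ 2 ^ (n - 1) ≤ 2 ^ 2 ^ n :=
      Nat.pow_le_pow_right (by omega) (Nat.pow_le_pow_right (by omega) (by omega))
    omega
end

section
/- Plotkin bound: let C ⊆ {0,1}ⁿ be a set of strings whose minimum Hamming distance d (every two distinct strings of C differ in at least d positions) satisfies 2d > n. Then |C| ≤ 2d/(2d − n). -/
lemma four_mul_le_sq (a b : ℕ) : 4 * (a * b) ≤ (a + b) * (a + b) := by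
  nlinarith [sq_nonneg ((a : ℤ) - b)]

/-- Plotkin bound: a binary code of length `n` and minimum Hamming distance `d` with
`2d > n` has at most `2d/(2d − n)` codewords. -/
theorem plotkin_bound (n d : ℕ) (hd : n < 2 * d)
    (C : Finset (Fin n → Bool))
    (hdist : ∀ u ∈ C, ∀ v ∈ C, u ≠ v → d ≤ hammingDist u v) :
    C.card ≤ 2 * d / (2 * d - n) := by
  classical
  set M := C.card with hM
  rcases Nat.lt_or_ge M 2 with hM2 | hM2
  · have h1 : 1 ≤ 2 * d / (2 * d - n) :=
      (Nat.le_div_iff_mul_le (by omega)).2 (by omega)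
    omega
  · have hMpos : 0 < M := by omega
    set S := ∑ u ∈ C, ∑ v ∈ C, hammingDist u v with hS
    -- lower bound
    have hlow : M * ((M - 1) * d) ≤ S := by
      rw [hS]
      have : ∀ u ∈ C, (M - 1) * d ≤ ∑ v ∈ C, hammingDist u v := by
        intro u hu
        have h1 : (M - 1) * d = ∑ _v ∈ C.erase u, d := by
          rw [Finset.sum_const, Finset.card_erase_of_mem hu, smul_eq_mul]
        rw [h1]
        calc ∑ v ∈ C.erase u, d ≤ ∑ v ∈ C.erase u, hammingDist u v := by
              apply Finset.sum_le_sum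
              intro v hv
              exact hdist u hu v (Finset.mem_of_mem_erase hv)
                (Ne.symm (Finset.ne_of_mem_erase hv))
          _ ≤ ∑ v ∈ C, hammingDist u v :=
              Finset.sum_le_sum_of_subset (Finset.erase_subset u C)
      calc M * ((M - 1) * d) = ∑ _u ∈ C, (M - 1) * d := by
            rw [Finset.sum_const, smul_eq_mul]
        _ ≤ ∑ u ∈ C, ∑ v ∈ C, hammingDist u v := Finset.sum_le_sum this
    -- upper bound
    have hup : 2 * S ≤ n * (M * M) := by
      have hdist_eq : ∀ u v : Fin n → Bool,
          hammingDist u v = ∑ i : Fin n, (if u i ≠ v i then 1 else 0) := by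
        intro u v
        simp [hammingDist, Finset.card_filter]
      have hSswap : S = ∑ i : Fin n, ∑ u ∈ C, ∑ v ∈ C,
          (if u i ≠ v i then 1 else 0) := by
        rw [hS]
        simp_rw [hdist_eq]
        rw [show (∑ u ∈ C, ∑ v ∈ C, ∑ i : Fin n, (if u i ≠ v i then (1:ℕ) else 0))
            = ∑ u ∈ C, ∑ i : Fin n, ∑ v ∈ C, (if u i ≠ v i then (1:ℕ) else 0) from
          Finset.sum_congr rfl fun u _ => Finset.sum_comm]
        exact Finset.sum_comm
      have key : ∀ i : Fin n,
          (∑ u ∈ C, ∑ v ∈ C, (if u i ≠ v i then (1:ℕ) else 0)) =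
          2 * ((C.filter fun u => u i = true).card *
               (C.filter fun u => ¬ u i = true).card) := by
        intro i
        set A := C.filter fun u => u i = true with hA
        set B := C.filter fun u => ¬ u i = true with hB
        have hinner : ∀ u ∈ C, (∑ v ∈ C, (if u i ≠ v i then (1:ℕ) else 0)) =
            if u i = true then B.card else A.card := by
          intro u hu
          rw [← Finset.card_filter]
          by_cases h : u i = true
          · rw [if_pos h, hB]
            congr 1
            apply Finset.filter_congr
            intro v hv
            cases hv2 : v i <;> simp [h, hv2]
          · rw [if_neg h, hA]
            have h' : u i = false := by simpa using h
            congr 1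
            apply Finset.filter_congr
            intro v hv
            cases hv2 : v i <;> simp [h', hv2]
        rw [Finset.sum_congr rfl hinner]
        rw [← Finset.sum_filter_add_sum_filter_not C (fun u => u i = true)]
        rw [← hA, ← hB]
        have e1 : ∑ u ∈ A, (if u i = true then B.card else A.card) = A.card * B.card := by
          rw [Finset.sum_congr rfl (fun u hu => by
            rw [if_pos (Finset.mem_filter.mp hu).2]), Finset.sum_const, smul_eq_mul]
        have e2 : ∑ u ∈ B, (if u i = true then B.card else A.card) = B.card * A.card := by
          rw [Finset.sum_congr rfl (fun u hu => by
            rw [if_neg (Finset.mem_filter.mp hu).2]), Finset.sum_const, smul_eq_mul]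
        rw [e1, e2]; ring
      have hab : ∀ i : Fin n, (C.filter fun u => u i = true).card +
          (C.filter fun u => ¬ u i = true).card = M := by
        intro i
        rw [hM]
        exact Finset.card_filter_add_card_filter_not _
      calc 2 * S = ∑ i : Fin n, 4 * ((C.filter fun u => u i = true).card *
              (C.filter fun u => ¬ u i = true).card) := by
            rw [hSswap, Finset.mul_sum]
            apply Finset.sum_congr rfl
            intro i _
            rw [key i]; ring
        _ ≤ ∑ i : Fin n, M * M := by
            apply Finset.sum_le_sum
            intro i _
            calc 4 * ((C.filter fun u => u i = true).card *
                  (C.filter fun u => ¬ u i = true).card)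
                ≤ ((C.filter fun u => u i = true).card +
                   (C.filter fun u => ¬ u i = true).card) *
                  ((C.filter fun u => u i = true).card +
                   (C.filter fun u => ¬ u i = true).card) := four_mul_le_sq _ _
              _ = M * M := by rw [hab i]
        _ = n * (M * M) := by
            rw [Finset.sum_const, Finset.card_univ, Fintype.card_fin, smul_eq_mul]
    -- combine
    have hcomb : 2 * (M * ((M - 1) * d)) ≤ n * (M * M) := by
      calc 2 * (M * ((M - 1) * d)) ≤ 2 * S := by omega
        _ ≤ n * (M * M) := hup
    have hcancel : 2 * ((M - 1) * d) ≤ n * M := by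
      have h1 : M * (2 * ((M - 1) * d)) ≤ M * (n * M) := by
        calc M * (2 * ((M - 1) * d)) = 2 * (M * ((M - 1) * d)) := by ring
          _ ≤ n * (M * M) := hcomb
          _ = M * (n * M) := by ring
      exact Nat.le_of_mul_le_mul_left h1 hMpos
    obtain ⟨m, hm⟩ : ∃ m, M = m + 1 := ⟨M - 1, by omega⟩
    have hm1 : M - 1 = m := by omega
    rw [hm1, hm] at hcancel
    have hfin : M * (2 * d) ≤ 2 * d + M * n := by
      rw [hm]; nlinarith [hcancel]
    rw [Nat.le_div_iff_mul_le (by omega)]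
    have h2 : M * (2 * d - n) + M * n = M * (2 * d) := by
      rw [← Nat.mul_add, Nat.sub_add_cancel (by omega)]
    omega
end

section
/- Existence of small sample sets by the probabilistic method: for every t and ε > 0 there exists a multiset S ⊆ {0,1}ᵗ of size s = O(t/ε²) such that for every subset T ⊆ {0,1}ᵗ that is 'simple' (member of a fixed family F of at most 2^t subsets), the fraction of elements of S in T differs from |T|/2ᵗ by at most ε. Concretely, s = ⌈(t+2)/(2ε²)⌉ suffices. -/
/-!
Draw the `s` sample points independently and uniformly. For a fixed `T`, the number of sample
points in `T` is a sum of `s` independent indicators, so by Hoeffding's inequality it deviates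
from `s |T| / 2ᵗ` by at least `s ε` with probability at most `2 exp (-2 s ε²)`. A union bound over
the at most `2ᵗ` members of the family bounds the failure probability by
`2ᵗ⁺¹ exp (-(t + 2)) < 1`, so some sample is good for every member.
-/

open MeasureTheory ProbabilityTheory Real Finset
open scoped NNReal

namespace ProbabilityTheory

variable {Ω ι : Type*} {mΩ : MeasurableSpace Ω} {μ : Measure Ω}

lemma measureReal_abs_sum_ge_le_of_iIndepFun {X : ι → Ω → ℝ} (h_indep : iIndepFun X μ)
    {c : ι → ℝ≥0} {s : Finset ι} (h_subG : ∀ i ∈ s, HasSubgaussianMGF (X i) (c i) μ)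
    {ε : ℝ} (hε : 0 ≤ ε) :
    μ.real {ω | ε ≤ |∑ i ∈ s, X i ω|} ≤ 2 * exp (-ε ^ 2 / (2 * ∑ i ∈ s, c i)) := by
  have h_indep_neg : iIndepFun (fun i ↦ -X i) μ :=
    h_indep.comp (fun _ ↦ Neg.neg) fun _ ↦ measurable_neg
  have h_split : {ω | ε ≤ |∑ i ∈ s, X i ω|}
      = {ω | ε ≤ ∑ i ∈ s, X i ω} ∪ {ω | ε ≤ ∑ i ∈ s, (-X i) ω} := by
    ext ω
    simp [le_abs]
  calc μ.real {ω | ε ≤ |∑ i ∈ s, X i ω|}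
      ≤ μ.real {ω | ε ≤ ∑ i ∈ s, X i ω} + μ.real {ω | ε ≤ ∑ i ∈ s, (-X i) ω} :=
        h_split ▸ measureReal_union_le _ _
    _ ≤ 2 * exp (-ε ^ 2 / (2 * ∑ i ∈ s, c i)) := by
      rw [two_mul]
      exact add_le_add (HasSubgaussianMGF.measure_sum_ge_le_of_iIndepFun h_indep h_subG hε)
        (HasSubgaussianMGF.measure_sum_ge_le_of_iIndepFun h_indep_neg
          (fun i hi ↦ (h_subG i hi).neg) hε)

variable {α : Type*} [MeasurableSpace α] (P : Measure α) [IsProbabilityMeasure P]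

lemma measureReal_pi_abs_card_filter_sub_ge_le {T : Set α} (hT : MeasurableSet T)
    [DecidablePred (· ∈ T)] (s : ℕ) {ε : ℝ} (hε : 0 ≤ ε) :
    (Measure.pi fun _ : Fin s ↦ P).real
        {r | s * ε ≤ |(#{i | r i ∈ T} : ℝ) - s * P.real T|} ≤ 2 * exp (-2 * s * ε ^ 2) := by
  set X : α → ℝ := fun a ↦ T.indicator 1 a - P.real T
  have hX : HasSubgaussianMGF X ((‖(1 : ℝ) - 0‖₊ / 2) ^ 2) P := by
    have := hasSubgaussianMGF_of_mem_Icc (μ := P) (X := T.indicator 1) (a := 0) (b := 1)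
      (measurable_one.indicator hT).aemeasurable
      (ae_of_all _ fun a ↦ by by_cases ha : a ∈ T <;> simp [ha])
    rwa [integral_indicator_one hT] at this
  have h_indep : iIndepFun (fun (i : Fin s) r ↦ X (r i)) (Measure.pi fun _ : Fin s ↦ P) :=
    iIndepFun_pi fun _ ↦ ((measurable_one.indicator hT).sub_const _).aemeasurable
  have h_subG : ∀ i ∈ (univ : Finset (Fin s)), HasSubgaussianMGF (fun r ↦ X (r i))
      ((‖(1 : ℝ) - 0‖₊ / 2) ^ 2) (Measure.pi fun _ : Fin s ↦ P) :=
    fun i _ ↦ HasSubgaussianMGF.of_map (X := X) (measurable_pi_apply i).aemeasurable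
      (by rwa [(measurePreserving_eval (fun _ ↦ P) i).map_eq])
  have := measureReal_abs_sum_ge_le_of_iIndepFun h_indep h_subG (mul_nonneg s.cast_nonneg hε)
  convert this using 3
  · ext r
    simp only [X, sum_sub_distrib, Set.indicator_apply, Pi.one_apply, natCast_card_filter]
    simp
  · rcases s.eq_zero_or_pos with rfl | hs
    · -- the Hoeffding exponent is `0 / 0 = 0` here
      simp
    · simp only [sub_zero, nnnorm_one, sum_const, card_univ, Fintype.card_fin, nsmul_eq_mul,
        NNReal.coe_mul, NNReal.coe_natCast, NNReal.coe_pow, NNReal.coe_div, NNReal.coe_one,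
        NNReal.coe_ofNat]
      field_simp

lemma exists_pi_forall_abs_card_filter_sub_lt (𝓕 : Finset ι) (T : ι → Set α)
    (hT : ∀ j, MeasurableSet (T j)) [∀ j, DecidablePred (· ∈ T j)] {s : ℕ} {ε : ℝ} (hε : 0 ≤ ε)
    (h𝓕 : #𝓕 * (2 * exp (-2 * s * ε ^ 2)) < 1) :
    ∃ r : Fin s → α, ∀ j ∈ 𝓕, |(#{i | r i ∈ T j} : ℝ) - s * P.real (T j)| < s * ε := by
  let bad (j : ι) : Set (Fin s → α) := {r | s * ε ≤ |(#{i | r i ∈ T j} : ℝ) - s * P.real (T j)|}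
  have h_bad : (Measure.pi fun _ ↦ P).real (⋃ j ∈ 𝓕, bad j) < 1 := calc
    _ ≤ ∑ j ∈ 𝓕, (Measure.pi fun _ ↦ P).real (bad j) := measureReal_biUnion_finset_le _ _
    _ ≤ ∑ _j ∈ 𝓕, 2 * exp (-2 * s * ε ^ 2) :=
      sum_le_sum fun j _ ↦ measureReal_pi_abs_card_filter_sub_ge_le P (hT j) s hε
    _ < 1 := by rwa [sum_const, nsmul_eq_mul]
  obtain ⟨r, hr⟩ : ∃ r, r ∉ ⋃ j ∈ 𝓕, bad j := by
    by_contra! h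
    simp [Set.eq_univ_of_forall h] at h_bad
  exact ⟨r, fun j hj ↦ not_le.1 fun h ↦ hr (Set.mem_biUnion hj h)⟩

end ProbabilityTheory

lemma uniformOn_univ_real_finset {α : Type*} [Fintype α] [MeasurableSpace α]
    [MeasurableSingletonClass α] (T : Finset α) :
    (uniformOn Set.univ : Measure α).real T = #T / Fintype.card α := by
  simp [Measure.real, uniformOn_univ, Measure.count_apply_finset]

lemma two_pow_succ_mul_exp_neg_lt_one (t : ℕ) {x : ℝ} (hx : t + 2 ≤ x) :
    2 ^ (t + 1) * exp (-x) < 1 := by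
  rw [exp_neg, ← div_eq_mul_inv, div_lt_one (exp_pos x)]
  calc (2 : ℝ) ^ (t + 1) ≤ exp 1 ^ (t + 1) := by gcongr; linarith [add_one_le_exp (1 : ℝ)]
    _ = exp (t + 1) := by rw [← exp_nat_mul]; push_cast; ring_nf
    _ < exp x := exp_lt_exp.2 (by linarith)

lemma abs_div_sub_le_of_abs_sub_mul_lt {c p s ε : ℝ} (hs : 0 < s) (h : |c - s * p| < s * ε) :
    |c / s - p| ≤ ε := by
  rw [show c / s - p = (c - s * p) / s by field_simp, abs_div, abs_of_pos hs, div_le_iff₀ hs]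
  linarith

/-- Existence of small sample sets: for any family `𝓕` of at most `2ᵗ` subsets of
`{0,1}ᵗ`, there is a multiset (tuple) of `s = ⌈(t+2)/(2ε²)⌉` points whose empirical
fraction in every `T ∈ 𝓕` is within `ε` of `|T|/2ᵗ`. -/
theorem small_sample_set_exists (t : ℕ) (ε : ℝ) (hε : 0 < ε)
    (𝓕 : Finset (Finset (Fin t → Bool))) (h𝓕 : 𝓕.card ≤ 2 ^ t) :
    ∃ r : Fin ⌈((t : ℝ) + 2) / (2 * ε ^ 2)⌉₊ → (Fin t → Bool),
      ∀ T ∈ 𝓕,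
        |((Finset.univ.filter fun i => r i ∈ T).card : ℝ)
            / (⌈((t : ℝ) + 2) / (2 * ε ^ 2)⌉₊ : ℝ)
          - (T.card : ℝ) / 2 ^ t| ≤ ε := by
  set s := ⌈((t : ℝ) + 2) / (2 * ε ^ 2)⌉₊
  have hs : (t : ℝ) + 2 ≤ 2 * s * ε ^ 2 := by
    have := Nat.le_ceil (((t : ℝ) + 2) / (2 * ε ^ 2))
    rw [div_le_iff₀ (by positivity)] at this
    linarith
  have hs_pos : (0 : ℝ) < s := Nat.cast_pos.2 (Nat.ceil_pos.2 (by positivity))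
  have h_union : #𝓕 * (2 * exp (-2 * s * ε ^ 2)) < 1 := calc
    _ ≤ 2 ^ t * (2 * exp (-(2 * s * ε ^ 2))) := by
      rw [neg_mul, neg_mul]
      gcongr
      exact_mod_cast h𝓕
    _ < 1 := by
      rw [← mul_assoc, ← pow_succ]
      exact two_pow_succ_mul_exp_neg_lt_one t hs
  obtain ⟨r, hr⟩ := exists_pi_forall_abs_card_filter_sub_lt (uniformOn Set.univ) 𝓕
    (fun T ↦ (T : Set (Fin t → Bool))) (fun T ↦ T.measurableSet) hε.le h_union
  refine ⟨r, fun T hT ↦ abs_div_sub_le_of_abs_sub_mul_lt hs_pos ?_⟩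
  simpa [uniformOn_univ_real_finset] using hr T hT
end
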